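/- Let X be a finite n-dimensional simplicial complex satisfying condition (1_X), let 0 ≤ i ≤ n−1, and let f ∈ C^i(X). If there is a positive real number Λ such that (Δρ_v f, ρ_v f) ≤ Λ·(ρ_v f, f) for every vertex v of X, then i·(Δf, f) ≤ (Λ·(i+1) − (n−i))·(f, f). -/

import Mathlib

open Finset

open scoped Classical

variable {V : Type*}

/-- A (finite) simplicial complex on the vertex type `V`: a collection of nonempty
finite sets of vertices (the simplices) closed under passing to nonempty subsets. -/
def IsComplex [DecidableEq V] (K : Finset (Finset V)) : Prop :=
  (∀ s ∈ K, s.Nonempty) ∧ ∀ s ∈ K, ∀ t : Finset V, t ⊆ s → t.Nonempty → t ∈ K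

/-- `K` is `n`-dimensional and satisfies condition `(1_X)`: every simplex has dimension
at most `n` and is a face of some `n`-dimensional simplex (one of cardinality `n+1`). -/
def IsPureDim [DecidableEq V] (K : Finset (Finset V)) (n : ℕ) : Prop :=
  (∀ s ∈ K, s.card ≤ n + 1) ∧ ∀ s ∈ K, ∃ t ∈ K, s ⊆ t ∧ t.card = n + 1

/-- `wt K n s` : the number `w(s)` of `n`-dimensional simplices of `K` containing `s`. -/
noncomputable def wt [DecidableEq V] (K : Finset (Finset V)) (n : ℕ) (s : Finset V) : ℕ :=
  (K.filter fun t => s ⊆ t ∧ t.card = n + 1).card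

/-- An `m`-tuple of vertices is allowed when its entries are distinct and form a simplex
of `K`; i.e. it is an oriented `(m-1)`-simplex of `K`. -/
def Allowed [DecidableEq V] [Fintype V] (K : Finset (Finset V)) {m : ℕ}
    (v : Fin m → V) : Prop :=
  Function.Injective v ∧ Finset.image v Finset.univ ∈ K

/-- `f` is an `(m-1)`-cochain on `K`: a real-valued alternating function on oriented
`(m-1)`-simplices of `K` (realized as a function on all `m`-tuples of vertices which is
alternating and vanishes on tuples which are not oriented simplices of `K`). -/
def IsCochain [DecidableEq V] [Fintype V] (K : Finset (Finset V)) (m : ℕ)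
    (f : (Fin m → V) → ℝ) : Prop :=
  (∀ (σ : Equiv.Perm (Fin m)) (v : Fin m → V),
      f (v ∘ σ) = ((Equiv.Perm.sign σ : ℤ) : ℝ) * f v) ∧
  ∀ v : Fin m → V, ¬ Allowed K v → f v = 0

/-- The inner product `(f,g) = ∑_s w(s)·f(s)·g(s)` on `(m-1)`-cochains, the sum being over
the unoriented `(m-1)`-simplices `s` of `K` (each with an arbitrarily chosen orientation);
summing over all `m`-tuples counts each simplex `m!` times, whence the normalization. -/
noncomputable def innerC [DecidableEq V] [Fintype V] (K : Finset (Finset V)) (n m : ℕ)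
    (f g : (Fin m → V) → ℝ) : ℝ :=
  (∑ v : Fin m → V, (wt K n (Finset.image v Finset.univ) : ℝ) * f v * g v) /
    (Nat.factorial m : ℝ)

/-- The coboundary `d : C^{m-1}(K) → C^m(K)`. -/
noncomputable def cobound [DecidableEq V] [Fintype V] (K : Finset (Finset V)) {m : ℕ}
    (f : (Fin m → V) → ℝ) : (Fin (m + 1) → V) → ℝ :=
  fun v => if Allowed K v then
    ∑ j : Fin (m + 1), (-1 : ℝ) ^ (j : ℕ) * f (v ∘ Fin.succAbove j)
  else 0

/-- The operator `δ : C^m(K) → C^{m-1}(K)`,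
`(δf)(s) = ∑_x (w([x,s])/w(s))·f([x,s])`, the sum being over the vertices `x`
such that `[x,s]` is an oriented simplex of `K`. -/
noncomputable def codiff [DecidableEq V] [Fintype V] (K : Finset (Finset V)) (n : ℕ) {m : ℕ}
    (f : (Fin (m + 1) → V) → ℝ) : (Fin m → V) → ℝ :=
  fun s => ∑ x : V,
    if Allowed K (Fin.cons x s) then
      ((wt K n (Finset.image (Fin.cons x s) Finset.univ) : ℝ) /
          (wt K n (Finset.image s Finset.univ) : ℝ)) * f (Fin.cons x s)
    else 0

/-- The Laplace operator `Δ = δ ∘ d` on `(m-1)`-cochains. -/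
noncomputable def lap [DecidableEq V] [Fintype V] (K : Finset (Finset V)) (n : ℕ) {m : ℕ}
    (f : (Fin m → V) → ℝ) : (Fin m → V) → ℝ :=
  codiff K n (cobound K f)

/-- `ρ_v : C^{m-1}(K) → C^{m-1}(K)`: `(ρ_v f)(s) = f(s)` if `v` is a vertex of `s`,
and `0` otherwise. -/
noncomputable def rho [DecidableEq V] {m : ℕ} (v : V) (f : (Fin m → V) → ℝ) :
    (Fin m → V) → ℝ :=
  fun s => if ∃ j, s j = v then f s else 0

/-- The vertices of `K`. -/
noncomputable def verts [DecidableEq V] [Fintype V] (K : Finset (Finset V)) : Finset V :=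
  Finset.univ.filter fun v => {v} ∈ K

/-- The link `Lk(v)` of a vertex `v`: all simplices `s` of `K` with `v ∉ s` and
`s ∪ {v} ∈ K`. -/
noncomputable def linkK [DecidableEq V] (K : Finset (Finset V)) (v : V) :
    Finset (Finset V) :=
  K.filter fun s => v ∉ s ∧ insert v s ∈ K

/-- `τ_v : C^{m}(K) → C^{m-1}(Lk(v))`: `(τ_v f)(s) = f([v,s])` for `s` an oriented
simplex of the link `Lk(v)`. -/
noncomputable def tau [DecidableEq V] [Fintype V] (K : Finset (Finset V)) (v : V) {m : ℕ}
    (f : (Fin (m + 1) → V) → ℝ) : (Fin m → V) → ℝ :=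
  fun s => if Allowed (linkK K v) s then f (Fin.cons v s) else 0

/-- `c` is an eigenvalue of the Laplace operator acting on `(m-1)`-cochains of `K`. -/
def IsEigen [DecidableEq V] [Fintype V] (K : Finset (Finset V)) (n m : ℕ) (c : ℝ) : Prop :=
  ∃ f : (Fin m → V) → ℝ, f ≠ 0 ∧ IsCochain K m f ∧ lap K n f = c • f

/-!
Garland's method. Adjointness of `d` and `δ` gives `(Δg, g) = (dg, dg)` for every cochain `g`.
Summing the localizations `ρ_v f` over the vertices, each `i`-simplex is counted once per
vertex, so `∑_v (ρ_v f, f) = (i+1)(f, f)`. On an `(i+1)`-simplex `u` the cochain `d ρ_v f`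
differs from `df` only by the face of `u` opposite `v`; expanding the squares, and counting
each `i`-simplex `s` through its cofaces (`∑_x w(s ∪ {x}) = (n-i) w(s)`), gives
`∑_v (dρ_v f, dρ_v f) = i (df, df) + (n-i)(f, f)`. Summing the hypothesis over `v` therefore
yields `i (df, df) + (n-i)(f, f) ≤ Λ (i+1)(f, f)`.
-/

open Equiv Equiv.Perm

def IsAlternating {m : ℕ} (f : (Fin m → V) → ℝ) : Prop :=
  ∀ (σ : Perm (Fin m)) (v : Fin m → V), f (v ∘ σ) = ((sign σ : ℤ) : ℝ) * f v

noncomputable def altFaceSum {m : ℕ} (f : (Fin m → V) → ℝ) (u : Fin (m + 1) → V) : ℝ :=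
  ∑ j : Fin (m + 1), (-1 : ℝ) ^ (j : ℕ) * f (u ∘ Fin.succAbove j)

lemma cast_sign_mul_self {m : ℕ} (σ : Perm (Fin m)) :
    ((sign σ : ℤ) : ℝ) * ((sign σ : ℤ) : ℝ) = 1 := by
  rw [← Int.cast_mul, ← Units.val_mul, Int.units_mul_self, Units.val_one, Int.cast_one]

lemma cons_comp_succ {m : ℕ} (x : V) (s : Fin m → V) : Fin.cons x s ∘ Fin.succ = s :=
  funext fun _ => Fin.cons_succ _ _ _

lemma cycleRange_symm_comp_succ {m : ℕ} (j : Fin (m + 1)) :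
    ⇑(Fin.cycleRange j).symm ∘ Fin.succ = Fin.succAbove j := by
  funext x
  apply (Fin.cycleRange j).injective
  simp [Fin.cycleRange_succAbove]

section Permutations

/-- Every permutation `π` of `Fin (m + 1)` is `succAbovePerm (π 0) e` for a unique `e`. -/
noncomputable def succAbovePerm {m : ℕ} (j : Fin (m + 1)) (e : Perm (Fin m)) :
    Perm (Fin (m + 1)) :=
  (Fin.cycleRange j)⁻¹ * decomposeFin.symm (0, e)

variable {m : ℕ} (j : Fin (m + 1)) (e : Perm (Fin m))

lemma succAbovePerm_zero : succAbovePerm j e 0 = j := by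
  apply (Fin.cycleRange j).injective
  simp [succAbovePerm, Fin.cycleRange_self]

lemma succAbovePerm_succ (x : Fin m) : succAbovePerm j e x.succ = j.succAbove (e x) := by
  rw [← cycleRange_symm_comp_succ]
  simp [succAbovePerm, Perm.mul_apply]

lemma sign_succAbovePerm : sign (succAbovePerm j e) = (-1) ^ (j : ℕ) * sign e := by
  rw [succAbovePerm, Perm.sign_mul, sign_inv, Fin.sign_cycleRange, decomposeFin.symm_sign]
  simp

lemma succAbovePerm_bijective :
    Function.Bijective fun p : Fin (m + 1) × Perm (Fin m) => succAbovePerm p.1 p.2 := by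
  rw [Fintype.bijective_iff_injective_and_card]
  refine ⟨?_, by simp [Fintype.card_perm, Nat.factorial_succ]⟩
  rintro ⟨j, e⟩ ⟨j', e'⟩ h
  obtain rfl : j = j' := by
    simpa only [succAbovePerm_zero] using congrArg (fun π : Perm _ => π 0) h
  refine Prod.ext rfl (Equiv.ext fun x => Fin.succAbove_right_injective (p := j) ?_)
  simpa only [succAbovePerm_succ] using congrArg (fun π : Perm _ => π x.succ) h

end Permutations

section Alternating

variable {m : ℕ} {f : (Fin m → V) → ℝ}

lemma IsAlternating.sum_sign_mul_comp_succ (hf : IsAlternating f) (u : Fin (m + 1) → V) :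
    ∑ π : Perm (Fin (m + 1)), ((sign π : ℤ) : ℝ) * f (u ∘ π ∘ Fin.succ)
      = m.factorial * altFaceSum f u := by
  rw [← Fintype.sum_bijective _ succAbovePerm_bijective _ _ fun _ => rfl,
    Fintype.sum_prod_type, altFaceSum, mul_sum]
  refine sum_congr rfl fun j _ => ?_
  have hterm : ∀ e : Perm (Fin m), ((sign (succAbovePerm j e) : ℤ) : ℝ) *
      f (u ∘ succAbovePerm j e ∘ Fin.succ)
        = (-1 : ℝ) ^ (j : ℕ) * f (u ∘ j.succAbove) := by
    intro e
    have hface : u ∘ succAbovePerm j e ∘ Fin.succ = (u ∘ j.succAbove) ∘ e := by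
      ext x; simp [succAbovePerm_succ]
    rw [hface, hf, sign_succAbovePerm]
    push_cast
    linear_combination (-1 : ℝ) ^ (j : ℕ) * f (u ∘ j.succAbove) * cast_sign_mul_self e
  simp [hterm, Fintype.card_perm]

lemma IsAlternating.altFaceSum (hf : IsAlternating f) : IsAlternating (altFaceSum f) := by
  intro τ u
  have hfac : (m.factorial : ℝ) ≠ 0 := Nat.cast_ne_zero.2 m.factorial_ne_zero
  apply mul_left_cancel₀ hfac
  rw [← hf.sum_sign_mul_comp_succ, mul_left_comm, ← hf.sum_sign_mul_comp_succ, mul_sum]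
  conv_rhs => rw [← Equiv.sum_comp (Equiv.mulLeft τ)]
  refine sum_congr rfl fun π _ => ?_
  simp only [coe_mulLeft, Perm.sign_mul, Units.val_mul, Int.cast_mul, Perm.coe_mul,
    Function.comp_assoc]
  linear_combination
    (-((sign π : ℤ) : ℝ)) * f (u ∘ τ ∘ π ∘ Fin.succ) * cast_sign_mul_self τ

end Alternating

section Faces

variable [DecidableEq V] {K : Finset (Finset V)} {n m : ℕ}

lemma image_comp_perm (v : Fin m → V) (σ : Perm (Fin m)) :
    image (v ∘ σ) univ = image v univ := by
  rw [← image_image, image_univ_equiv]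

lemma image_cons (x : V) (s : Fin m → V) :
    image (Fin.cons x s) univ = insert x (image s univ) := by
  ext y
  simp only [mem_image, mem_univ, true_and, Fin.exists_fin_succ, Fin.cons_zero, Fin.cons_succ,
    mem_insert]
  tauto

lemma wt_pos (hpure : IsPureDim K n) {A : Finset V} (hA : A ∈ K) : 0 < wt K n A := by
  obtain ⟨t, ht, hAt, hcard⟩ := hpure.2 A hA
  exact card_pos.2 ⟨t, mem_filter.2 ⟨ht, hAt, hcard⟩⟩

lemma wt_eq_zero_of_not_mem (hcplx : IsComplex K) {A : Finset V} (hA : A ∉ K)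
    (hne : A.Nonempty) : wt K n A = 0 := by
  rw [wt, card_eq_zero, filter_eq_empty_iff]
  rintro t ht ⟨hAt, -⟩
  exact hA (hcplx.2 t ht A hAt hne)

lemma altFaceSum_rho_of_not_mem (f : (Fin m → V) → ℝ) {u : Fin (m + 1) → V} {v : V}
    (hv : v ∉ image u univ) : altFaceSum (rho v f) u = 0 := by
  refine sum_eq_zero fun j _ => ?_
  rw [rho, if_neg, mul_zero]
  rintro ⟨l, rfl⟩
  exact hv (mem_image_of_mem _ (mem_univ _))

lemma altFaceSum_rho_self (f : (Fin m → V) → ℝ) {u : Fin (m + 1) → V}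
    (hu : Function.Injective u) (k : Fin (m + 1)) :
    altFaceSum (rho (u k) f) u = altFaceSum f u - (-1) ^ (k : ℕ) * f (u ∘ k.succAbove) := by
  have hface : ∀ j : Fin (m + 1), (-1 : ℝ) ^ (j : ℕ) * rho (u k) f (u ∘ j.succAbove)
      = (-1) ^ (j : ℕ) * f (u ∘ j.succAbove)
        - if k = j then (-1) ^ (k : ℕ) * f (u ∘ k.succAbove) else 0 := by
    intro j
    simp only [rho, Function.comp_apply, hu.eq_iff, Fin.exists_succAbove_eq_iff]
    by_cases hkj : k = j
    · subst hkj
      simp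
    · simp [hkj]
  rw [altFaceSum, altFaceSum, sum_congr rfl fun j _ => hface j, sum_sub_distrib, sum_ite_eq,
    if_pos (mem_univ k)]

/-- On a simplex `u`, `d ρ_v f` is `df` with the face opposite `v` removed. -/
lemma sum_sq_altFaceSum_rho (f : (Fin m → V) → ℝ) {u : Fin (m + 1) → V}
    (hu : Function.Injective u) {S : Finset V} (hS : image u univ ⊆ S) :
    ∑ v ∈ S, altFaceSum (rho v f) u ^ 2
      = (m - 1) * altFaceSum f u ^ 2 + ∑ k : Fin (m + 1), f (u ∘ k.succAbove) ^ 2 := by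
  rw [← sum_subset hS fun v _ hv => by rw [altFaceSum_rho_of_not_mem f hv, sq, mul_zero],
    sum_image fun _ _ _ _ h => hu h]
  simp only [altFaceSum_rho_self f hu]
  have hterm : ∀ k : Fin (m + 1), (altFaceSum f u - (-1) ^ (k : ℕ) * f (u ∘ k.succAbove)) ^ 2
      = altFaceSum f u ^ 2 - 2 * altFaceSum f u * ((-1) ^ (k : ℕ) * f (u ∘ k.succAbove))
        + f (u ∘ k.succAbove) ^ 2 := by
    intro k
    have hsign : ((-1 : ℝ) ^ (k : ℕ)) ^ 2 = 1 := by
      rw [← pow_mul, pow_mul', neg_one_sq, one_pow]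
    rw [sub_sq, mul_pow, hsign, one_mul]
  rw [sum_congr rfl fun k _ => hterm k, sum_add_distrib, sum_sub_distrib, ← mul_sum,
    ← altFaceSum, sum_const, card_univ, Fintype.card_fin, nsmul_eq_mul]
  push_cast
  ring

end Faces

section Cochains

variable [Fintype V]

lemma sum_comp_perm {m : ℕ} (G : (Fin m → V) → ℝ) (σ : Perm (Fin m)) :
    ∑ v : Fin m → V, G (v ∘ σ) = ∑ v : Fin m → V, G v :=
  Equiv.sum_comp (σ.symm.arrowCongr (Equiv.refl V)) G

lemma sum_tuple_eq_sum_cons {m : ℕ} (G : (Fin (m + 1) → V) → ℝ) :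
    ∑ u : Fin (m + 1) → V, G u = ∑ x : V, ∑ s : Fin m → V, G (Fin.cons x s) := by
  rw [← Equiv.sum_comp (Fin.consEquiv fun _ => V) G, Fintype.sum_prod_type]
  rfl

/-- Reindexing by the cycle `(Fin.cycleRange j)⁻¹` turns the `j`-th face into the `0`-th one. -/
lemma sum_mul_comp_succAbove {m : ℕ} (j : Fin (m + 1)) (ε : ℝ)
    (Φ : (Fin (m + 1) → V) → ℝ) (G : (Fin m → V) → ℝ)
    (hΦ : ∀ u, Φ (u ∘ (Fin.cycleRange j).symm) = ε * Φ u) :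
    ∑ u, ε * Φ u * G (u ∘ Fin.succAbove j) = ∑ u, Φ u * G (u ∘ Fin.succ) := by
  conv_rhs => rw [← sum_comp_perm _ (Fin.cycleRange j).symm]
  simp only [hΦ, Function.comp_assoc, cycleRange_symm_comp_succ, mul_assoc]

variable [DecidableEq V] {K : Finset (Finset V)} {n m : ℕ}

lemma allowed_comp_perm_iff (v : Fin m → V) (σ : Perm (Fin m)) :
    Allowed K (v ∘ σ) ↔ Allowed K v := by
  rw [Allowed, Allowed, image_comp_perm, Function.Injective.of_comp_iff' _ σ.bijective]

lemma allowed_cons_iff {x : V} {s : Fin m → V} (hs : Function.Injective s) :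
    Allowed K (Fin.cons x s) ↔ x ∉ image s univ ∧ insert x (image s univ) ∈ K := by
  rw [Allowed, Fin.cons_injective_iff, image_cons]
  simp [hs]

lemma card_image_of_allowed {v : Fin m → V} (hv : Allowed K v) : #(image v univ) = m := by
  rw [card_image_of_injective _ hv.1, card_univ, Fintype.card_fin]

lemma image_subset_verts (hcplx : IsComplex K) {v : Fin m → V} (hv : Allowed K v) :
    image v univ ⊆ verts K := by
  intro x hx
  rw [verts, mem_filter]
  exact ⟨mem_univ x, hcplx.2 _ hv.2 {x} (singleton_subset_iff.2 hx) (singleton_nonempty x)⟩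

lemma IsCochain.isAlternating {f : (Fin m → V) → ℝ} (hf : IsCochain K m f) :
    IsAlternating f :=
  hf.1

lemma IsCochain.allowed_of_ne_zero {f : (Fin m → V) → ℝ} (hf : IsCochain K m f)
    {s : Fin m → V} (hs : f s ≠ 0) : Allowed K s := by
  by_contra h
  exact hs (hf.2 s h)

lemma cobound_apply (f : (Fin m → V) → ℝ) (u : Fin (m + 1) → V) :
    cobound K f u = if Allowed K u then altFaceSum f u else 0 :=
  rfl

lemma IsCochain.cobound {f : (Fin m → V) → ℝ} (hf : IsCochain K m f) :
    IsCochain K (m + 1) (cobound K f) := by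
  refine ⟨fun σ u => ?_, fun u hu => if_neg hu⟩
  simp only [cobound_apply, allowed_comp_perm_iff]
  split_ifs
  · exact hf.isAlternating.altFaceSum σ u
  · rw [mul_zero]

lemma IsCochain.rho {f : (Fin m → V) → ℝ} (hf : IsCochain K m f) (v : V) :
    IsCochain K m (rho v f) := by
  refine ⟨fun σ s => ?_, fun s hs => by simp [_root_.rho, hf.2 s hs]⟩
  have hmem : (∃ j, (s ∘ σ) j = v) ↔ ∃ j, s j = v :=
    ⟨fun ⟨j, hj⟩ => ⟨σ j, hj⟩, fun ⟨j, hj⟩ => ⟨σ.symm j, by simpa using hj⟩⟩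
  simp only [_root_.rho, hmem]
  split_ifs
  · exact hf.isAlternating σ s
  · rw [mul_zero]

/-- Double counting of the pairs `(x, t)` with `x ∉ A` and `t ⊇ A ∪ {x}` an `n`-simplex. -/
lemma sum_wt_insert (A : Finset V) :
    ∑ x ∈ Aᶜ, wt K n (insert x A) = (n + 1 - #A) * wt K n A := by
  set T := K.filter fun t => A ⊆ t ∧ #t = n + 1
  have habove : ∀ x ∈ Aᶜ, wt K n (insert x A) = #(T.bipartiteAbove (· ∈ ·) x) := by
    intro x _
    simp only [wt, T, bipartiteAbove, filter_filter, insert_subset_iff]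
    congr 1
    exact filter_congr fun t _ => by tauto
  have hbelow : ∀ t ∈ T, #(Aᶜ.bipartiteBelow (· ∈ ·) t) = n + 1 - #A := by
    intro t ht
    obtain ⟨-, hAt, hcard⟩ := mem_filter.1 ht
    rw [bipartiteBelow, ← hcard, ← card_sdiff_of_subset hAt]
    congr 1
    ext x
    simp [and_comm]
  rw [sum_congr rfl habove, sum_card_bipartiteAbove_eq_sum_card_bipartiteBelow,
    sum_congr rfl hbelow, sum_const, smul_eq_mul, mul_comm]
  rfl

lemma sum_allowed_wt_mul_comp_succ (hcplx : IsComplex K) {G : (Fin m → V) → ℝ}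
    (hG : ∀ s, G s ≠ 0 → Allowed K s) :
    ∑ u : Fin (m + 1) → V,
        (if Allowed K u then (wt K n (image u univ) : ℝ) else 0) * G (u ∘ Fin.succ)
      = ((n + 1 - m : ℕ) : ℝ) * ∑ s : Fin m → V, (wt K n (image s univ) : ℝ) * G s := by
  rw [sum_tuple_eq_sum_cons, sum_comm, mul_sum]
  refine sum_congr rfl fun s _ => ?_
  simp only [cons_comp_succ, ← sum_mul]
  by_cases hs : G s = 0
  · simp [hs]
  have hsA := hG s hs
  have hcofaces : ∀ x, (if Allowed K (Fin.cons x s) then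
      (wt K n (image (Fin.cons x s) univ) : ℝ) else 0)
        = if x ∈ (image s univ)ᶜ then (wt K n (insert x (image s univ)) : ℝ) else 0 := by
    intro x
    rw [allowed_cons_iff hsA.1, image_cons]
    by_cases hx : x ∈ image s univ
    · simp [hx]
    by_cases hK : insert x (image s univ) ∈ K
    · simp [hx, hK]
    · simp [hx, hK, wt_eq_zero_of_not_mem hcplx hK (insert_nonempty _ _)]
  rw [sum_congr rfl fun x _ => hcofaces x, sum_ite_mem, univ_inter, ← Nat.cast_sum,
    sum_wt_insert, card_image_of_allowed hsA]
  push_cast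
  ring

lemma innerC_codiff (hpure : IsPureDim K n) {h : (Fin (m + 1) → V) → ℝ}
    (hh : IsCochain K (m + 1) h) {g : (Fin m → V) → ℝ} (hg : IsCochain K m g) :
    innerC K n m (codiff K n h) g = innerC K n (m + 1) h (cobound K g) := by
  have hleft : ∑ s : Fin m → V, (wt K n (image s univ) : ℝ) * codiff K n h s * g s
      = ∑ u : Fin (m + 1) → V, (wt K n (image u univ) : ℝ) * h u * g (u ∘ Fin.succ) := by
    rw [sum_tuple_eq_sum_cons, sum_comm]
    refine sum_congr rfl fun s _ => ?_
    simp only [codiff, mul_sum, sum_mul, cons_comp_succ]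
    refine sum_congr rfl fun x _ => ?_
    by_cases hx : Allowed K (Fin.cons x s)
    · rw [if_pos hx]
      by_cases hs : g s = 0
      · simp [hs]
      have hw : (wt K n (image s univ) : ℝ) ≠ 0 := by
        exact_mod_cast (wt_pos hpure (hg.allowed_of_ne_zero hs).2).ne'
      field_simp
    · rw [if_neg hx, hh.2 _ hx]
      ring
  have hright : ∑ u : Fin (m + 1) → V, (wt K n (image u univ) : ℝ) * h u * cobound K g u
      = (m + 1) * ∑ u : Fin (m + 1) → V,
          (wt K n (image u univ) : ℝ) * h u * g (u ∘ Fin.succ) := by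
    have hfaces : ∀ u, (wt K n (image u univ) : ℝ) * h u * cobound K g u
        = ∑ j : Fin (m + 1), (-1 : ℝ) ^ (j : ℕ) * ((wt K n (image u univ) : ℝ) * h u) *
            g (u ∘ j.succAbove) := by
      intro u
      by_cases hu : Allowed K u
      · rw [cobound_apply, if_pos hu, altFaceSum, mul_sum]
        exact sum_congr rfl fun j _ => by ring
      · simp [hh.2 u hu]
    have hrot : ∀ j : Fin (m + 1), ∑ u : Fin (m + 1) → V,
        (-1 : ℝ) ^ (j : ℕ) * ((wt K n (image u univ) : ℝ) * h u) * g (u ∘ j.succAbove)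
          = ∑ u : Fin (m + 1) → V, (wt K n (image u univ) : ℝ) * h u * g (u ∘ Fin.succ) :=
      fun j => sum_mul_comp_succAbove j _ _ g fun u => by
        rw [image_comp_perm, hh.isAlternating, sign_symm, Fin.sign_cycleRange]
        push_cast
        ring
    rw [sum_congr rfl fun u _ => hfaces u, sum_comm, sum_congr rfl fun j _ => hrot j, sum_const,
      card_univ, Fintype.card_fin, nsmul_eq_mul]
    push_cast
    ring
  rw [innerC, innerC, hleft, hright, Nat.factorial_succ]
  push_cast
  field_simp

lemma innerC_lap_self (hpure : IsPureDim K n) {g : (Fin m → V) → ℝ} (hg : IsCochain K m g) :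
    innerC K n m (lap K n g) g = innerC K n (m + 1) (cobound K g) (cobound K g) :=
  innerC_codiff hpure hg.cobound hg

lemma sum_innerC_rho (hcplx : IsComplex K) {f : (Fin m → V) → ℝ} (hf : IsCochain K m f) :
    ∑ v ∈ verts K, innerC K n m (rho v f) f = m * innerC K n m f f := by
  simp only [innerC, ← sum_div, mul_div_assoc']
  congr 1
  rw [sum_comm, mul_sum]
  refine sum_congr rfl fun s _ => ?_
  by_cases hs : f s = 0
  · simp [hs]
  have hsA := hf.allowed_of_ne_zero hs
  have hρ : ∀ v, (wt K n (image s univ) : ℝ) * rho v f s * f s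
      = if v ∈ image s univ then (wt K n (image s univ) : ℝ) * f s * f s else 0 := by
    intro v
    simp only [rho, mem_image, mem_univ, true_and]
    split_ifs <;> ring
  rw [sum_congr rfl fun v _ => hρ v, sum_ite_mem, inter_eq_right.2 (image_subset_verts hcplx hsA),
    sum_const, card_image_of_allowed hsA, nsmul_eq_mul]

lemma sum_innerC_cobound_rho (hcplx : IsComplex K) {f : (Fin m → V) → ℝ}
    (hf : IsCochain K m f) :
    ∑ v ∈ verts K, innerC K n (m + 1) (cobound K (rho v f)) (cobound K (rho v f))
      = (m - 1) * innerC K n (m + 1) (cobound K f) (cobound K f)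
        + ((n + 1 - m : ℕ) : ℝ) * innerC K n m f f := by
  set Φ : (Fin (m + 1) → V) → ℝ :=
    fun u => if Allowed K u then (wt K n (image u univ) : ℝ) else 0
  have hpointwise : ∀ u : Fin (m + 1) → V, ∑ v ∈ verts K,
      (wt K n (image u univ) : ℝ) * cobound K (rho v f) u * cobound K (rho v f) u
        = (m - 1) * ((wt K n (image u univ) : ℝ) * cobound K f u * cobound K f u)
          + ∑ k : Fin (m + 1), Φ u * (f (u ∘ k.succAbove) * f (u ∘ k.succAbove)) := by
    intro u
    by_cases hu : Allowed K u
    · simp only [Φ, cobound_apply, if_pos hu, mul_assoc, ← mul_sum, ← sq,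
        sum_sq_altFaceSum_rho f hu.1 (image_subset_verts hcplx hu)]
      ring
    · simp [Φ, cobound_apply, hu]
  have hrot : ∀ k : Fin (m + 1), ∑ u : Fin (m + 1) → V,
      Φ u * (f (u ∘ k.succAbove) * f (u ∘ k.succAbove))
        = ((n + 1 - m : ℕ) : ℝ) *
            ∑ s : Fin m → V, (wt K n (image s univ) : ℝ) * f s * f s := by
    intro k
    have hrotate := sum_mul_comp_succAbove k 1 Φ (fun s => f s * f s) fun u => by
      simp only [Φ, allowed_comp_perm_iff, image_comp_perm, one_mul]
    simp only [one_mul] at hrotate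
    rw [hrotate]
    simp only [mul_assoc]
    exact sum_allowed_wt_mul_comp_succ hcplx fun s hs =>
      hf.allowed_of_ne_zero (left_ne_zero_of_mul hs)
  simp only [innerC, ← sum_div]
  rw [sum_comm, sum_congr rfl fun u _ => hpointwise u, sum_add_distrib, ← mul_sum, sum_comm,
    sum_congr rfl fun k _ => hrot k, sum_const, card_univ, Fintype.card_fin, nsmul_eq_mul,
    Nat.factorial_succ]
  push_cast
  field_simp

end Cochains

theorem garland_corollary_general
    [Fintype V] [DecidableEq V] (K : Finset (Finset V)) (n i : ℕ)
    (hcplx : IsComplex K) (hpure : IsPureDim K n) (hi : i + 1 ≤ n)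
    (f : (Fin (i + 1) → V) → ℝ) (hf : IsCochain K (i + 1) f)
    (Λ : ℝ)
    (hΛ : ∀ v ∈ verts K,
      innerC K n (i + 1) (lap K n (rho v f)) (rho v f)
        ≤ Λ * innerC K n (i + 1) (rho v f) f) :
    (i : ℝ) * innerC K n (i + 1) (lap K n f) f
      ≤ (Λ * ((i : ℝ) + 1) - ((n : ℝ) - (i : ℝ))) * innerC K n (i + 1) f f := by
  have hlocal : ∑ v ∈ verts K, innerC K n (i + 1) (lap K n (rho v f)) (rho v f)
      = i * innerC K n (i + 1) (lap K n f) f + (n - i) * innerC K n (i + 1) f f := by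
    simp only [innerC_lap_self hpure (hf.rho _), innerC_lap_self hpure hf]
    rw [sum_innerC_cobound_rho hcplx hf, Nat.add_sub_add_right, Nat.cast_sub (by omega)]
    push_cast
    ring
  have hsum := sum_le_sum hΛ
  rw [hlocal, ← mul_sum, sum_innerC_rho hcplx hf] at hsum
  push_cast at hsum
  linarith

/-- if `(Δρ_v f, ρ_v f) ≤ Λ·(ρ_v f, f)` for some `Λ > 0` and every vertex
`v` of `X`, then `i·(Δf,f) ≤ (Λ·(i+1) - (n-i))·(f,f)`. -/
theorem garland_corollary
    [Fintype V] [DecidableEq V] (K : Finset (Finset V)) (n i : ℕ)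
    (hcplx : IsComplex K) (hpure : IsPureDim K n) (hi : i + 1 ≤ n)
    (f : (Fin (i + 1) → V) → ℝ) (hf : IsCochain K (i + 1) f)
    (Λ : ℝ) (hΛpos : 0 < Λ)
    (hΛ : ∀ v ∈ verts K,
      innerC K n (i + 1) (lap K n (rho v f)) (rho v f)
        ≤ Λ * innerC K n (i + 1) (rho v f) f) :
    (i : ℝ) * innerC K n (i + 1) (lap K n f) f
      ≤ (Λ * ((i : ℝ) + 1) - ((n : ℝ) - (i : ℝ))) * innerC K n (i + 1) f f :=
  garland_corollary_general K n i hcplx hpure hi f hf Λ hΛ
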